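/- Define h(ω) := 1 − √π·ω·exp(ω²)·erfc(ω). Then for every ω > 0: 1 − 2/(1 + √(1 + 4/(π·ω²))) ≤ h(ω) ≤ 1 − 2/(1 + √(1 + 2/ω²)). -/

import Mathlib

open Real MeasureTheory Set

/-- The complementary error function. -/
noncomputable def erfc (z : ℝ) : ℝ :=
  (2 / Real.sqrt π) * ∫ u in Set.Ioi z, Real.exp (-u ^ 2)

/-- `h(ω) = 1 − √π · ω · exp(ω²) · erfc(ω)`. -/
noncomputable def hfun (ω : ℝ) : ℝ :=
  1 - Real.sqrt π * ω * Real.exp (ω ^ 2) * erfc ω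

/-! Write `I(x) = ∫_x^∞ e^{-u²} du`, so that `h(ω) = 1 - 2ω e^{ω²} I(ω)` and the claim becomes
`e^{-ω²}/(ω + √(ω² + 2)) ≤ I(ω) ≤ e^{-ω²}/(ω + √(ω² + 4/π))`. For `a > 0` the gap
`D_a(x) = I(x) - e^{-x²}/(x + √(x² + a))` tends to `0` at infinity, and `D_a'(x)` has the sign of
`x √(x² + a) - (x² + a - 1)`, i.e. for `x ≥ 0` that of `x² (2 - a) - (a - 1)²`.
For `a ≥ 2` the gap is therefore decreasing, hence nonnegative. For `1 ≤ a < 2` it decreases and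
then increases, so on `[0, ∞)` it stays below `max (D_a 0) 0`; and `D_a 0 = √π/2 - 1/√a ≤ 0`
exactly when `a ≤ 4/π`. -/

open Filter Topology

lemma le_of_antitoneOn_Icc_of_monotoneOn_Ici {α β : Type*} [LinearOrder α] [TopologicalSpace β]
    [Preorder β] [OrderClosedTopology β] {f : α → β} {a b x : α} {l : β}
    (h₁ : AntitoneOn f (Icc a b)) (h₂ : MonotoneOn f (Ici b)) (ha : f a ≤ l)
    (hl : Tendsto f atTop (𝓝 l)) (hx : a ≤ x) : f x ≤ l := by
  have : Nonempty α := ⟨x⟩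
  rcases le_or_gt x b with hxb | hbx
  · exact (h₁ ⟨le_rfl, hx.trans hxb⟩ ⟨hx, hxb⟩ hx).trans ha
  · exact ge_of_tendsto hl ((eventually_ge_atTop x).mono fun y hy =>
      h₂ hbx.le (hbx.le.trans hy) hy)

noncomputable def gaussTail (x : ℝ) : ℝ := ∫ u in Ioi x, exp (-u ^ 2)

lemma integrable_exp_neg_sq : Integrable fun u : ℝ => exp (-u ^ 2) := by
  simpa using integrable_exp_neg_mul_sq one_pos

lemma gaussTail_zero : gaussTail 0 = √π / 2 := by
  simpa [gaussTail] using integral_gaussian_Ioi 1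

lemma gaussTail_eq_sub_intervalIntegral (x : ℝ) :
    gaussTail x = gaussTail 0 - ∫ u in (0 : ℝ)..x, exp (-u ^ 2) := by
  rw [← intervalIntegral.integral_Ioi_sub_Ioi' integrable_exp_neg_sq.integrableOn
    integrable_exp_neg_sq.integrableOn, gaussTail, gaussTail, sub_sub_cancel]

lemma hasDerivAt_gaussTail (x : ℝ) : HasDerivAt gaussTail (-exp (-x ^ 2)) x := by
  have hcont : Continuous fun u : ℝ => exp (-u ^ 2) := by fun_prop
  have := (intervalIntegral.integral_hasDerivAt_right (hcont.intervalIntegrable 0 x)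
    (hcont.stronglyMeasurableAtFilter _ _) hcont.continuousAt).const_sub (gaussTail 0)
  exact this.congr_of_eventuallyEq (.of_forall gaussTail_eq_sub_intervalIntegral)

lemma tendsto_gaussTail_atTop : Tendsto gaussTail atTop (𝓝 0) :=
  tendsto_integral_Ioi_zero tendsto_id

lemma hfun_eq_one_sub_gaussTail (ω : ℝ) : hfun ω = 1 - 2 * ω * exp (ω ^ 2) * gaussTail ω := by
  have : √π ≠ 0 := by positivity
  rw [hfun, erfc, gaussTail]
  field_simp

noncomputable def tailApprox (a x : ℝ) : ℝ := exp (-x ^ 2) / (x + √(x ^ 2 + a))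

section tailApprox

variable {a : ℝ}

lemma add_sqrt_sq_add_pos (ha : 0 < a) (x : ℝ) : 0 < x + √(x ^ 2 + a) := by
  have : |x| < √(x ^ 2 + a) := by
    rw [← sqrt_sq_eq_abs]
    exact sqrt_lt_sqrt (sq_nonneg x) (by linarith)
  linarith [neg_abs_le x]

lemma sqrt_mul_add_sqrt_pos (ha : 0 < a) (x : ℝ) : 0 < √(x ^ 2 + a) * (x + √(x ^ 2 + a)) :=
  mul_pos (sqrt_pos.2 (by positivity)) (add_sqrt_sq_add_pos ha x)

lemma tendsto_tailApprox_atTop : Tendsto (tailApprox a) atTop (𝓝 0) := by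
  have hexp : Tendsto (fun x : ℝ => exp (-x ^ 2)) atTop (𝓝 0) :=
    tendsto_exp_neg_atTop_nhds_zero.comp (tendsto_pow_atTop two_ne_zero)
  refine hexp.div_atTop (tendsto_atTop_mono (fun x => ?_) tendsto_id)
  simp only [id, le_add_iff_nonneg_right, sqrt_nonneg]

lemma hasDerivAt_tailApprox (ha : 0 < a) (x : ℝ) :
    HasDerivAt (tailApprox a)
      (-(exp (-x ^ 2) * (2 * x * √(x ^ 2 + a) + 1) / (√(x ^ 2 + a) * (x + √(x ^ 2 + a))))) x := by
  have hs : 0 < √(x ^ 2 + a) := sqrt_pos.2 (by positivity)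
  have hxs := add_sqrt_sq_add_pos ha x
  have hnum : HasDerivAt (fun y : ℝ => exp (-y ^ 2)) (exp (-x ^ 2) * -(2 * x)) x := by
    simpa using ((hasDerivAt_pow 2 x).neg).exp
  have hden : HasDerivAt (fun y : ℝ => y + √(y ^ 2 + a))
      (1 + 2 * x / (2 * √(x ^ 2 + a))) x := by
    simpa using (hasDerivAt_id' x).fun_add
      (((hasDerivAt_pow 2 x).add_const a).sqrt (by positivity))
  refine (hnum.fun_div hden hxs.ne').congr_deriv ?_
  field_simp
  ring

lemma mul_sqrt_sq_add_le_iff (ha : 1 ≤ a) {x : ℝ} (hx : 0 ≤ x) :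
    x * √(x ^ 2 + a) ≤ x ^ 2 + a - 1 ↔ x ^ 2 * (2 - a) ≤ (a - 1) ^ 2 := by
  rw [← pow_le_pow_iff_left₀ (by positivity) (by nlinarith) two_ne_zero, mul_pow,
    sq_sqrt (by positivity)]
  constructor <;> intro h <;> linarith

lemma le_mul_sqrt_sq_add_iff (ha : 1 ≤ a) {x : ℝ} (hx : 0 ≤ x) :
    x ^ 2 + a - 1 ≤ x * √(x ^ 2 + a) ↔ (a - 1) ^ 2 ≤ x ^ 2 * (2 - a) := by
  rw [← pow_le_pow_iff_left₀ (by nlinarith) (by positivity) two_ne_zero, mul_pow,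
    sq_sqrt (by positivity)]
  constructor <;> intro h <;> linarith

noncomputable def tailGap (a x : ℝ) : ℝ := gaussTail x - tailApprox a x

lemma hasDerivAt_tailGap (ha : 0 < a) (x : ℝ) :
    HasDerivAt (tailGap a) (exp (-x ^ 2) / (√(x ^ 2 + a) * (x + √(x ^ 2 + a))) *
      (x * √(x ^ 2 + a) - (x ^ 2 + a - 1))) x := by
  have hs : 0 < √(x ^ 2 + a) := sqrt_pos.2 (by positivity)
  have hxs := add_sqrt_sq_add_pos ha x
  have hsq : √(x ^ 2 + a) ^ 2 = x ^ 2 + a := sq_sqrt (by positivity)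
  refine ((hasDerivAt_gaussTail x).fun_sub (hasDerivAt_tailApprox ha x)).congr_deriv ?_
  field_simp
  linear_combination -hsq

lemma tendsto_tailGap_atTop : Tendsto (tailGap a) atTop (𝓝 0) := by
  have := tendsto_gaussTail_atTop.sub (tendsto_tailApprox_atTop (a := a))
  rwa [sub_zero] at this

lemma tailGap_zero_nonpos (ha : 0 < a) (haπ : a ≤ 4 / π) : tailGap a 0 ≤ 0 := by
  have h0 : tailGap a 0 = √π / 2 - 1 / √a := by simp [tailGap, tailApprox, gaussTail_zero]
  have h : √π * √a ≤ 2 := by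
    rw [← sqrt_mul pi_pos.le, sqrt_le_left zero_le_two, ← le_div_iff₀' pi_pos]
    linarith
  rw [h0, sub_nonpos, div_le_div_iff₀ two_pos (sqrt_pos.2 ha)]
  linarith

lemma tailApprox_le_gaussTail (ha : 2 ≤ a) (x : ℝ) : tailApprox a x ≤ gaussTail x := by
  have hanti : Antitone (tailGap a) := by
    refine antitone_of_hasDerivAt_nonpos (hasDerivAt_tailGap (by linarith)) fun y => ?_
    refine mul_nonpos_of_nonneg_of_nonpos
      (div_nonneg (exp_pos _).le (sqrt_mul_add_sqrt_pos (by linarith) y).le) (sub_nonpos.2 ?_)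
    rcases le_or_gt 0 y with hy | hy
    · exact (mul_sqrt_sq_add_le_iff (by linarith) hy).2 (by nlinarith)
    · nlinarith [mul_nonpos_of_nonpos_of_nonneg hy.le (sqrt_nonneg (y ^ 2 + a))]
  have := hanti.le_of_tendsto tendsto_tailGap_atTop x
  rwa [tailGap, sub_nonneg] at this

lemma gaussTail_le_tailApprox {x : ℝ} (ha : 1 ≤ a) (haπ : a ≤ 4 / π) (hx : 0 ≤ x) :
    gaussTail x ≤ tailApprox a x := by
  have ha₂ : a < 2 := haπ.trans_lt <| (div_lt_iff₀ pi_pos).2 (by linarith [pi_gt_three])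
  have hderiv y : HasDerivAt (tailGap a) _ y := hasDerivAt_tailGap (by linarith) y
  have hcont : Continuous (tailGap a) :=
    continuous_iff_continuousAt.2 fun y => (hderiv y).continuousAt
  have hfactor (y : ℝ) : 0 ≤ exp (-y ^ 2) / (√(y ^ 2 + a) * (y + √(y ^ 2 + a))) :=
    div_nonneg (exp_pos _).le (sqrt_mul_add_sqrt_pos (by linarith) y).le
  set x₀ := √((a - 1) ^ 2 / (2 - a))
  have hanti : AntitoneOn (tailGap a) (Icc 0 x₀) := by
    refine antitoneOn_of_hasDerivWithinAt_nonpos (convex_Icc 0 x₀) hcont.continuousOn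
      (fun y _ => (hderiv y).hasDerivWithinAt) fun y hy => ?_
    rw [interior_Icc] at hy
    have hy₂ := (le_sqrt hy.1.le (by positivity)).1 hy.2.le
    rw [le_div_iff₀ (by linarith)] at hy₂
    exact mul_nonpos_of_nonneg_of_nonpos (hfactor y)
      (sub_nonpos.2 ((mul_sqrt_sq_add_le_iff ha hy.1.le).2 hy₂))
  have hmono : MonotoneOn (tailGap a) (Ici x₀) := by
    refine monotoneOn_of_hasDerivWithinAt_nonneg (convex_Ici x₀) hcont.continuousOn
      (fun y _ => (hderiv y).hasDerivWithinAt) fun y hy => ?_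
    rw [interior_Ici] at hy
    have hy₀ : 0 ≤ y := (sqrt_nonneg _).trans hy.le
    have hy₂ := (sqrt_le_left hy₀).1 hy.le
    rw [div_le_iff₀ (by linarith)] at hy₂
    exact mul_nonneg (hfactor y) (sub_nonneg.2 ((le_mul_sqrt_sq_add_iff ha hy₀).2 hy₂))
  have := le_of_antitoneOn_Icc_of_monotoneOn_Ici hanti hmono
    (tailGap_zero_nonpos (by linarith) haπ) tendsto_tailGap_atTop hx
  rwa [tailGap, sub_nonpos] at this

end tailApprox

lemma two_div_one_add_sqrt_eq_mul_tailApprox {c ω : ℝ} (hc : 0 ≤ c) (hω : 0 < ω) :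
    2 / (1 + √(1 + c / ω ^ 2)) = 2 * ω * exp (ω ^ 2) * tailApprox c ω := by
  have hsqrt : √(1 + c / ω ^ 2) = √(ω ^ 2 + c) / ω := by
    rw [show 1 + c / ω ^ 2 = (ω ^ 2 + c) / ω ^ 2 by field_simp, sqrt_div (by positivity),
      sqrt_sq hω.le]
  rw [hsqrt, tailApprox, exp_neg]
  field_simp

theorem hfun_bounds :
    ∀ ω : ℝ, 0 < ω →
      1 - 2 / (1 + Real.sqrt (1 + 4 / (π * ω ^ 2))) ≤ hfun ω ∧
        hfun ω ≤ 1 - 2 / (1 + Real.sqrt (1 + 2 / ω ^ 2)) := by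
  intro ω hω
  rw [hfun_eq_one_sub_gaussTail, ← div_div,
    two_div_one_add_sqrt_eq_mul_tailApprox (by positivity) hω,
    two_div_one_add_sqrt_eq_mul_tailApprox zero_le_two hω]
  have hπ : 1 ≤ 4 / π := (one_le_div pi_pos).2 pi_le_four
  constructor
  · gcongr
    exact gaussTail_le_tailApprox hπ le_rfl hω.le
  · gcongr
    exact tailApprox_le_gaussTail le_rfl ω
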